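/- arXiv:1809.00316 — 2 statements merged into one kernel-verified Lean document; each statement's English description precedes it below -/
import Mathlib

section
/- For every n ∈ ℕ, the number of partitions of n into parts congruent to 1 or 4 modulo 5 satisfies (p_{1,5}+p_{4,5})(n) = M + ∑_{k≥1} (-1)^{k+1} ((p_{1,5}+p_{4,5})(n - P_{7,k}) + (p_{1,5}+p_{4,5})(n - Q_{7,k})), where M = (-1)^m if n = 5P_{5,m} or n = 5Q_{5,m} for some m ∈ ℕ, and M = 0 otherwise. -/
/-- Number of partitions of `n` all of whose parts satisfy `P`. -/
def restrictedPartitionCount (P : ℕ → Prop) [DecidablePred P] (n : ℕ) : ℕ :=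
  Fintype.card {p : Nat.Partition n // ∀ i ∈ p.parts, P i}

/-- Partitions into parts ≡ 1 or 4 (mod 5), extended to `ℤ` by `0` on negatives. -/
def p14Z (x : ℤ) : ℤ :=
  if 0 ≤ x then restrictedPartitionCount (fun i => i % 5 = 1 ∨ i % 5 = 4) x.toNat else 0

/-- Generalized pentagonal number `P_{5,m} = m(3m-1)/2` as an integer. -/
def pentZ (m : ℤ) : ℤ := m * (3 * m - 1) / 2

/-- Generalized pentagonal number `Q_{5,m} = m(3m+1)/2` as an integer. -/
def pentQZ (m : ℤ) : ℤ := m * (3 * m + 1) / 2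

/-- Generalized heptagonal number `P_{7,k} = k(5k-3)/2` as an integer. -/
def heptZ (k : ℤ) : ℤ := k * (5 * k - 3) / 2

/-- Generalized heptagonal number `Q_{7,k} = k(5k+3)/2` as an integer. -/
def heptQZ (k : ℤ) : ℤ := k * (5 * k + 3) / 2
namespace P14
open Finset
section GBpart
open Polynomial

noncomputable def gb : ℕ → ℤ → Polynomial ℤ
  | 0, r => if r = 0 then 1 else 0
  | (m+1), r => gb m r + X ^ ((m+1-r).toNat) * gb m (r-1)

lemma gb_def (m : ℕ) (r : ℤ) :
    gb (m+1) r = gb m r + X ^ (((m:ℤ)+1-r).toNat) * gb m (r-1) := rfl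

lemma gb_neg : ∀ (m : ℕ) (r : ℤ), r < 0 → gb m r = 0 := by
  intro m
  induction m with
  | zero => intro r hr; simp [gb, hr.ne]
  | succ m ih =>
      intro r hr
      simp [gb, ih r hr, ih (r-1) (by omega)]

lemma gb_gt : ∀ (m : ℕ) (r : ℤ), (m : ℤ) < r → gb m r = 0 := by
  intro m
  induction m with
  | zero => intro r hr; simp [gb]; omega
  | succ m ih =>
      intro r hr
      push_cast at hr
      simp [gb, ih r (by omega), ih (r-1) (by omega)]

lemma gb_zero (m : ℕ) : gb m 0 = 1 := by
  induction m with
  | zero => simp [gb]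
  | succ m ih => simp [gb, ih, gb_neg m (-1) (by omega)]

lemma gb_pascalB : ∀ (m : ℕ) (r : ℤ), gb (m+1) r = X ^ r.toNat * gb m r + gb m (r-1) := by
  intro m
  induction m with
  | zero =>
      intro r
      rcases lt_trichotomy r 0 with h | h | h
      · simp [gb, gb_neg, h, h.ne, show r - 1 < 0 by omega, show r ≠ 0 from h.ne,
          show r - 1 ≠ 0 by omega]
      · subst h; simp [gb]
      · rcases eq_or_lt_of_le (show (1:ℤ) ≤ r by omega) with h1 | h1
        · simp [gb, ← h1]
        · simp [gb, show r ≠ 0 by omega, show r - 1 ≠ 0 by omega, gb_neg]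
  | succ m ih =>
      intro r
      rcases lt_trichotomy r 0 with h | h | h
      · rw [gb_def (m+1) r, gb_neg (m+1) r h, gb_neg (m+1) (r-1) (by omega)]
        ring
      · subst h
        rw [gb_def (m+1) 0, gb_neg (m+1) (0-1) (by omega)]
        simp
      · by_cases h2 : (m:ℤ) + 2 < r
        · rw [gb_def (m+1) r, gb_gt (m+1) r (by push_cast; omega),
            gb_gt (m+1) (r-1) (by push_cast; omega)]
          ring
        · by_cases h3 : r = (m:ℤ) + 2
          · subst h3
            rw [gb_def (m+1) ((m:ℤ)+2), gb_gt (m+1) ((m:ℤ)+2) (by push_cast; omega)]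
            have e : (((m+1:ℕ):ℤ) + 1 - ((m:ℤ)+2)).toNat = 0 := by push_cast; omega
            rw [e]
            simp
          · have hr1 : 1 ≤ r := h
            have hr2 : r ≤ (m:ℤ) + 1 := by omega
            conv_lhs => rw [gb_def (m+1) r, ih r, ih (r-1)]
            conv_rhs => rw [gb_def m r, gb_def m (r-1)]
            have e0 : (((m+1:ℕ):ℤ) + 1 - r).toNat = ((m:ℤ)+2-r).toNat := by push_cast; omega
            have e0'' : ((m:ℤ) + 1 - (r-1)).toNat = ((m:ℤ)+2-r).toNat := by omega
            rw [e0, e0'']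
            have E1 : (X:Polynomial ℤ) ^ (((m:ℤ)+2-r).toNat) * X ^ ((r-1).toNat)
                = X ^ (r.toNat) * X ^ (((m:ℤ)+1-r).toNat) := by
              rw [← pow_add, ← pow_add]; congr 1; omega
            linear_combination gb m (r-1) * E1

noncomputable def pp (n : ℕ) : Polynomial ℤ := ∏ j ∈ range n, (1 - X^(j+1))

lemma pp_succ (n : ℕ) : pp (n+1) = pp n * (1 - X^(n+1)) := Finset.prod_range_succ _ _

lemma gb_top (m : ℕ) : gb m (m:ℤ) = 1 := by
  induction m with
  | zero => simp [gb]
  | succ m ih =>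
      push_cast
      rw [gb_def m ((m:ℤ)+1) , gb_gt m ((m:ℤ)+1) (by omega)]
      have e : ((m:ℤ) + 1 - ((m:ℤ)+1)).toNat = 0 := by omega

      rw [e, show (m:ℤ) + 1 - 1 = (m:ℤ) by ring, ih]
      simp

lemma gb_fact : ∀ (m r : ℕ), r ≤ m → gb m (r:ℤ) * (pp r * pp (m-r)) = pp m := by
  intro m
  induction m with
  | zero => intro r hr; interval_cases r; simp [gb, pp]
  | succ m ih =>
      intro r hr
      rcases Nat.eq_or_lt_of_le hr with h1 | h1
      · subst h1
        rw [show ((m+1:ℕ):ℤ) = ((m+1:ℕ):ℤ) from rfl, gb_top (m+1)]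
        simp [pp]
      · have hrm : r ≤ m := by omega
        rcases Nat.eq_zero_or_pos r with h0 | h0
        · subst h0
          simp only [Nat.cast_zero, gb_zero]
          simp [pp]
        · -- 1 ≤ r ≤ m
          rw [gb_def m (r:ℤ)]
          have e1 : ((m:ℤ) + 1 - (r:ℤ)).toNat = m + 1 - r := by omega
          have e2 : ((r:ℤ) - 1) = ((r-1:ℕ):ℤ) := by omega
          rw [e1, e2]
          rw [add_mul]
          have h2 : m + 1 - r = (m - r) + 1 := by omega
          have h3 : m - (r-1) = (m - r) + 1 := by omega
          have key1 : gb m (r:ℤ) * (pp r * pp (m+1-r)) = pp m * (1 - X^(m+1-r)) := by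
            rw [h2, pp_succ (m-r)]
            have := ih r hrm
            linear_combination (1 - X^(m-r+1)) * this
          have key2 : X ^ (m+1-r) * gb m ((r-1:ℕ):ℤ) * (pp r * pp (m+1-r)) =
              pp m * (X^(m+1-r) * (1 - X^r)) := by
            have := ih (r-1) (by omega)
            rw [h3] at this
            rw [show pp r = pp (r-1) * (1 - X^r) from by
              rw [show r = (r-1)+1 by omega, pp_succ]; rw [show r-1+1 = r by omega]]
            rw [show m+1-r = m-r+1 from h2, pp_succ (m-r)]
            rw [pp_succ (m-r)] at this
            linear_combination (X^(m-r+1) * (1 - X^r)) * this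
          rw [show m + 1 - r = (m+1) - r from rfl] at *
          rw [key1]
          rw [show X ^ (m+1-r) * gb m ((r-1:ℕ):ℤ) * (pp r * pp (m+1-r))
              = pp m * (X^(m+1-r) * (1 - X^r)) from key2]
          rw [pp_succ m]
          have e4 : X ^ (m+1-r) * (X:Polynomial ℤ)^r = X^(m+1) := by
            rw [← pow_add]; congr 1; omega
          linear_combination (-(pp m)) * e4



lemma gb_step (N : ℕ) (r : ℤ) (h1 : -1 ≤ r) (h2 : r ≤ 2*N+1) :
    gb (2*N+2) (r+1) = (1 + X^(2*N+1)) * gb (2*N) r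
      + X^((2*(N:ℤ)+1-r).toNat) * gb (2*N) (r-1) + X^((r+1).toNat) * gb (2*N) (r+1) := by
  rcases eq_or_lt_of_le h1 with h0 | h0
  · -- r = -1
    rw [← h0]
    rw [show (-1:ℤ)+1 = 0 by ring, gb_zero, gb_neg (2*N) (-1) (by omega),
      show (-1:ℤ)-1 = -2 by ring, gb_neg (2*N) (-2) (by omega), gb_zero]
    simp
  · have hr0 : 0 ≤ r := by omega
    have d1 : gb (2*N+2) (r+1) = gb (2*N+1) (r+1)
        + X ^ ((2*(N:ℤ)+1-r).toNat) * gb (2*N+1) r := by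
      have := gb_def (2*N+1) (r+1)
      rw [this]
      congr 3
      · push_cast; omega
      · omega
    rw [d1, gb_pascalB (2*N) (r+1), gb_pascalB (2*N) r, show r+1-1 = r by ring]
    have E : (X:Polynomial ℤ) ^ ((2*(N:ℤ)+1-r).toNat) * X ^ (r.toNat) = X ^ (2*N+1) := by
      rw [← pow_add]; congr 1; omega
    linear_combination (gb (2*N) r) * E

section Ring
variable {R : Type*} [CommRing R]

noncomputable def gbe (T : R) (m : ℕ) (r : ℤ) : R := Polynomial.eval₂ (Int.castRingHom R) T (gb m r)

lemma gbe_neg (T : R) (m : ℕ) (r : ℤ) (h : r < 0) : gbe T m r = 0 := by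
  rw [gbe, gb_neg m r h, Polynomial.eval₂_zero]

lemma gbe_gt (T : R) (m : ℕ) (r : ℤ) (h : (m:ℤ) < r) : gbe T m r = 0 := by
  rw [gbe, gb_gt m r h, Polynomial.eval₂_zero]

lemma gbe_step (T : R) (N : ℕ) (r : ℤ) (h1 : -1 ≤ r) (h2 : r ≤ 2*N+1) :
    gbe T (2*N+2) (r+1) = (1 + T^(2*N+1)) * gbe T (2*N) r
      + T^((2*(N:ℤ)+1-r).toNat) * gbe T (2*N) (r-1) + T^((r+1).toNat) * gbe T (2*N) (r+1) := by
  have := congrArg (Polynomial.eval₂RingHom (Int.castRingHom R) T) (gb_step N r h1 h2)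
  simpa [gbe, Polynomial.coe_eval₂RingHom, map_add, map_mul, map_pow, map_one,
    Polynomial.eval₂_X] using this

/-- the monomial `X^(k(k+1)/2) Y^(k(k-1)/2)` -/
noncomputable def mu (Xv Yv : R) (k : ℤ) : R :=
  Xv ^ ((k*(k+1)/2).toNat) * Yv ^ ((k*(k-1)/2).toNat)

lemma succ_self_nonneg (k : ℤ) : 0 ≤ k * (k+1) := by
  rcases le_or_gt 0 k with h | h
  · exact mul_nonneg h (by omega)
  · nlinarith

lemma half_succ (k : ℤ) : 2 * (k*(k+1)/2) = k*(k+1) ∧ 0 ≤ k*(k+1) :=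
  ⟨Int.two_mul_ediv_two_of_even (Int.even_mul_succ_self k), succ_self_nonneg k⟩

lemma half_pred (k : ℤ) : 2 * (k*(k-1)/2) = k*(k-1) ∧ 0 ≤ k*(k-1) := by
  have h1 : Even (k*(k-1)) := by
    have := Int.even_mul_succ_self (k-1)
    rwa [show (k-1)*((k-1)+1) = k*(k-1) by ring] at this
  have h2 : 0 ≤ k*(k-1) := by
    have := succ_self_nonneg (k-1)
    rwa [show (k-1)*((k-1)+1) = k*(k-1) by ring] at this
  exact ⟨Int.two_mul_ediv_two_of_even h1, h2⟩

lemma mu_shift_up (Xv Yv : R) (N : ℕ) (k : ℤ) (hk : k ≤ N) :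
    mu Xv Yv k * (Xv^(N+1) * Yv^N) = mu Xv Yv (k+1) * (Xv*Yv)^((N - k).toNat) := by
  obtain ⟨a1, a2⟩ := half_succ k
  obtain ⟨b1, b2⟩ := half_pred k
  obtain ⟨c1, c2⟩ := half_succ (k+1)
  obtain ⟨d1, d2⟩ := half_pred (k+1)
  have r1 : (k+1)*((k+1)+1) = k*(k+1) + 2*(k+1) := by ring
  have r2 : (k+1)*((k+1)-1) = k*(k-1) + 2*k := by ring
  have e1 : (k*(k+1)/2).toNat + (N+1) = ((k+1)*((k+1)+1)/2).toNat + (N - k).toNat := by omega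
  have e2 : (k*(k-1)/2).toNat + N = ((k+1)*((k+1)-1)/2).toNat + (N - k).toNat := by omega
  calc mu Xv Yv k * (Xv^(N+1) * Yv^N)
      = Xv ^ ((k*(k+1)/2).toNat + (N+1)) * Yv ^ ((k*(k-1)/2).toNat + N) := by
        rw [mu, pow_add, pow_add]; ring
    _ = Xv ^ (((k+1)*((k+1)+1)/2).toNat + (N - k).toNat)
        * Yv ^ (((k+1)*((k+1)-1)/2).toNat + (N - k).toNat) := by rw [e1, e2]
    _ = mu Xv Yv (k+1) * (Xv*Yv)^((N - k).toNat) := by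
        rw [mu, mul_pow, pow_add, pow_add]; ring

lemma mu_shift_down (Xv Yv : R) (N : ℕ) (k : ℤ) (hk : -(N:ℤ) ≤ k) :
    mu Xv Yv k * (Xv^N * Yv^(N+1)) = mu Xv Yv (k-1) * (Xv*Yv)^((N + k).toNat) := by
  obtain ⟨a1, a2⟩ := half_succ k
  obtain ⟨b1, b2⟩ := half_pred k
  obtain ⟨c1, c2⟩ := half_succ (k-1)
  obtain ⟨d1, d2⟩ := half_pred (k-1)
  have r1 : (k-1)*((k-1)+1) = k*(k-1) := by ring
  have r2 : (k-1)*((k-1)-1) = k*(k+1) - 2*(2*k-1) := by ring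
  have hq : k*(k+1) = k*(k-1) + 2*k := by ring
  have e1 : (k*(k+1)/2).toNat + N = ((k-1)*((k-1)+1)/2).toNat + (N + k).toNat := by omega
  have e2 : (k*(k-1)/2).toNat + (N+1) = ((k-1)*((k-1)-1)/2).toNat + (N + k).toNat := by omega
  calc mu Xv Yv k * (Xv^N * Yv^(N+1))
      = Xv ^ ((k*(k+1)/2).toNat + N) * Yv ^ ((k*(k-1)/2).toNat + (N+1)) := by
        rw [mu, pow_add, pow_add]; ring
    _ = Xv ^ (((k-1)*((k-1)+1)/2).toNat + (N + k).toNat)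
        * Yv ^ (((k-1)*((k-1)-1)/2).toNat + (N + k).toNat) := by rw [e1, e2]
    _ = mu Xv Yv (k-1) * (Xv*Yv)^((N + k).toNat) := by
        rw [mu, mul_pow, pow_add, pow_add]; ring

theorem finJTP (Xv Yv : R) (N : ℕ) :
    ∏ j ∈ range N, ((1 + Xv^(j+1) * Yv^j) * (1 + Xv^j * Yv^(j+1))) =
    ∑ k ∈ Icc (-(N:ℤ)) (N:ℤ), mu Xv Yv k * gbe (Xv*Yv) (2*N) ((N:ℤ)+k) := by
  induction N with
  | zero => simp [mu, gbe, gb]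
  | succ N ih =>
      have hsub1 : Icc (-(N:ℤ)) (N:ℤ) ⊆ Icc (-((N+1:ℕ):ℤ)) ((N+1:ℕ):ℤ) := by
        apply Finset.Icc_subset_Icc <;> push_cast <;> omega
      have hsub2 : Icc (-(N:ℤ)+1) ((N:ℤ)+1) ⊆ Icc (-((N+1:ℕ):ℤ)) ((N+1:ℕ):ℤ) := by
        apply Finset.Icc_subset_Icc <;> push_cast <;> omega
      have hsub3 : Icc (-(N:ℤ)-1) ((N:ℤ)-1) ⊆ Icc (-((N+1:ℕ):ℤ)) ((N+1:ℕ):ℤ) := by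
        apply Finset.Icc_subset_Icc <;> push_cast <;> omega
      have vanish : ∀ k : ℤ, k < -(N:ℤ) ∨ (N:ℤ) < k → gbe (Xv*Yv) (2*N) ((N:ℤ)+k) = 0 := by
        intro k hk
        rcases hk with h | h
        · exact gbe_neg _ _ _ (by omega)
        · exact gbe_gt _ _ _ (by push_cast; omega)
      -- the four sums, extended to the big interval
      have S1 : ∑ k ∈ Icc (-(N:ℤ)) (N:ℤ), mu Xv Yv k * gbe (Xv*Yv) (2*N) ((N:ℤ)+k)
          = ∑ k ∈ Icc (-((N+1:ℕ):ℤ)) ((N+1:ℕ):ℤ), mu Xv Yv k * gbe (Xv*Yv) (2*N) ((N:ℤ)+k) := by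
        apply Finset.sum_subset hsub1
        intro k _ hk2
        simp only [mem_Icc, not_and_or, not_le] at hk2
        rw [vanish k (by omega)]
        ring
      have S2 : ∑ k ∈ Icc (-(N:ℤ)) (N:ℤ),
            mu Xv Yv k * gbe (Xv*Yv) (2*N) ((N:ℤ)+k) * (Xv*Yv)^(2*N+1)
          = ∑ k ∈ Icc (-((N+1:ℕ):ℤ)) ((N+1:ℕ):ℤ),
            mu Xv Yv k * gbe (Xv*Yv) (2*N) ((N:ℤ)+k) * (Xv*Yv)^(2*N+1) := by
        apply Finset.sum_subset hsub1
        intro k _ hk2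
        simp only [mem_Icc, not_and_or, not_le] at hk2
        rw [vanish k (by omega)]
        ring
      have S3 : ∑ k ∈ Icc (-(N:ℤ)+1) ((N:ℤ)+1),
            mu Xv Yv k * (Xv*Yv)^(((N:ℤ)-(k-1)).toNat) * gbe (Xv*Yv) (2*N) ((N:ℤ)+(k-1))
          = ∑ k ∈ Icc (-((N+1:ℕ):ℤ)) ((N+1:ℕ):ℤ),
            mu Xv Yv k * (Xv*Yv)^(((N:ℤ)-(k-1)).toNat) * gbe (Xv*Yv) (2*N) ((N:ℤ)+(k-1)) := by
        apply Finset.sum_subset hsub2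
        intro k _ hk2
        simp only [mem_Icc, not_and_or, not_le] at hk2
        rw [vanish (k-1) (by omega)]
        ring
      have S4 : ∑ k ∈ Icc (-(N:ℤ)-1) ((N:ℤ)-1),
            mu Xv Yv k * (Xv*Yv)^(((N:ℤ)+(k+1)).toNat) * gbe (Xv*Yv) (2*N) ((N:ℤ)+(k+1))
          = ∑ k ∈ Icc (-((N+1:ℕ):ℤ)) ((N+1:ℕ):ℤ),
            mu Xv Yv k * (Xv*Yv)^(((N:ℤ)+(k+1)).toNat) * gbe (Xv*Yv) (2*N) ((N:ℤ)+(k+1)) := by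
        apply Finset.sum_subset hsub3
        intro k _ hk2
        simp only [mem_Icc, not_and_or, not_le] at hk2
        rw [vanish (k+1) (by omega)]
        ring
      -- reindexed versions of the cross terms
      have tA : ∑ k ∈ Icc (-(N:ℤ)) (N:ℤ),
            mu Xv Yv k * gbe (Xv*Yv) (2*N) ((N:ℤ)+k) * (Xv^(N+1)*Yv^N)
          = ∑ k ∈ Icc (-(N:ℤ)+1) ((N:ℤ)+1),
            mu Xv Yv k * (Xv*Yv)^(((N:ℤ)-(k-1)).toNat) * gbe (Xv*Yv) (2*N) ((N:ℤ)+(k-1)) := by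
        rw [← Finset.map_add_right_Icc (-(N:ℤ)) (N:ℤ) 1, Finset.sum_map]
        apply Finset.sum_congr rfl
        intro k hk
        simp only [mem_Icc] at hk
        simp only [addRightEmbedding_apply]
        rw [show (k+1) - 1 = k by ring]
        calc mu Xv Yv k * gbe (Xv*Yv) (2*N) ((N:ℤ)+k) * (Xv^(N+1)*Yv^N)
            = (mu Xv Yv k * (Xv^(N+1)*Yv^N)) * gbe (Xv*Yv) (2*N) ((N:ℤ)+k) := by ring
          _ = mu Xv Yv (k+1) * (Xv*Yv)^(((N:ℤ)-k).toNat) * gbe (Xv*Yv) (2*N) ((N:ℤ)+k) := by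
              rw [mu_shift_up Xv Yv N k hk.2]
      have tB : ∑ k ∈ Icc (-(N:ℤ)) (N:ℤ),
            mu Xv Yv k * gbe (Xv*Yv) (2*N) ((N:ℤ)+k) * (Xv^N*Yv^(N+1))
          = ∑ k ∈ Icc (-(N:ℤ)-1) ((N:ℤ)-1),
            mu Xv Yv k * (Xv*Yv)^(((N:ℤ)+(k+1)).toNat) * gbe (Xv*Yv) (2*N) ((N:ℤ)+(k+1)) := by
        have hmap : Icc (-(N:ℤ)-1) ((N:ℤ)-1)
            = Finset.map (addRightEmbedding (-1)) (Icc (-(N:ℤ)) (N:ℤ)) := by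
          rw [Finset.map_add_right_Icc]
          congr 1 <;> ring
        rw [hmap, Finset.sum_map]
        apply Finset.sum_congr rfl
        intro k hk
        simp only [mem_Icc] at hk
        simp only [addRightEmbedding_apply]
        rw [show (k + -1) + 1 = k by ring]
        calc mu Xv Yv k * gbe (Xv*Yv) (2*N) ((N:ℤ)+k) * (Xv^N*Yv^(N+1))
            = (mu Xv Yv k * (Xv^N*Yv^(N+1))) * gbe (Xv*Yv) (2*N) ((N:ℤ)+k) := by ring
          _ = mu Xv Yv (k-1) * (Xv*Yv)^(((N:ℤ)+k).toNat) * gbe (Xv*Yv) (2*N) ((N:ℤ)+k) := by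
              rw [mu_shift_down Xv Yv N k hk.1]
          _ = mu Xv Yv (k + -1) * (Xv*Yv)^(((N:ℤ)+k).toNat)
                * gbe (Xv*Yv) (2*N) ((N:ℤ)+k) := by rw [show k + -1 = k - 1 by ring]
      -- expansion of the new factor
      have expand : ∀ S : R, S * ((1 + Xv^(N+1) * Yv^N) * (1 + Xv^N * Yv^(N+1)))
          = S + S * (Xv*Yv)^(2*N+1) + S * (Xv^(N+1)*Yv^N) + S * (Xv^N*Yv^(N+1)) := by
        intro S
        have : Xv^(N+1)*Yv^N * (Xv^N*Yv^(N+1)) = (Xv*Yv)^(2*N+1) := by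
          rw [mul_pow, show 2*N+1 = (N+1)+N from by omega, pow_add Xv, pow_add Yv]
          ring
        linear_combination S * this
      calc ∏ j ∈ range (N+1), ((1 + Xv^(j+1) * Yv^j) * (1 + Xv^j * Yv^(j+1)))
          = (∑ k ∈ Icc (-(N:ℤ)) (N:ℤ), mu Xv Yv k * gbe (Xv*Yv) (2*N) ((N:ℤ)+k))
            * ((1 + Xv^(N+1) * Yv^N) * (1 + Xv^N * Yv^(N+1))) := by
            rw [prod_range_succ, ih]
        _ = (∑ k ∈ Icc (-(N:ℤ)) (N:ℤ), mu Xv Yv k * gbe (Xv*Yv) (2*N) ((N:ℤ)+k))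
            + (∑ k ∈ Icc (-(N:ℤ)) (N:ℤ),
                mu Xv Yv k * gbe (Xv*Yv) (2*N) ((N:ℤ)+k) * (Xv*Yv)^(2*N+1))
            + (∑ k ∈ Icc (-(N:ℤ)) (N:ℤ),
                mu Xv Yv k * gbe (Xv*Yv) (2*N) ((N:ℤ)+k) * (Xv^(N+1)*Yv^N))
            + (∑ k ∈ Icc (-(N:ℤ)) (N:ℤ),
                mu Xv Yv k * gbe (Xv*Yv) (2*N) ((N:ℤ)+k) * (Xv^N*Yv^(N+1))) := by
            rw [expand, ← Finset.sum_mul, ← Finset.sum_mul, ← Finset.sum_mul]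
        _ = ∑ k ∈ Icc (-((N+1:ℕ):ℤ)) ((N+1:ℕ):ℤ),
              (mu Xv Yv k * gbe (Xv*Yv) (2*N) ((N:ℤ)+k)
               + mu Xv Yv k * gbe (Xv*Yv) (2*N) ((N:ℤ)+k) * (Xv*Yv)^(2*N+1)
               + mu Xv Yv k * (Xv*Yv)^(((N:ℤ)-(k-1)).toNat) * gbe (Xv*Yv) (2*N) ((N:ℤ)+(k-1))
               + mu Xv Yv k * (Xv*Yv)^(((N:ℤ)+(k+1)).toNat) * gbe (Xv*Yv) (2*N) ((N:ℤ)+(k+1))) := by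
            rw [tA, tB, S1, S2, S3, S4, ← Finset.sum_add_distrib, ← Finset.sum_add_distrib,
              ← Finset.sum_add_distrib]
        _ = ∑ k ∈ Icc (-((N+1:ℕ):ℤ)) ((N+1:ℕ):ℤ),
              mu Xv Yv k * gbe (Xv*Yv) (2*(N+1)) (((N+1:ℕ):ℤ)+k) := by
            apply Finset.sum_congr rfl
            intro k hk
            simp only [mem_Icc] at hk
            push_cast at hk
            have hstep := gbe_step (Xv*Yv) N ((N:ℤ)+k) (by omega) (by omega)
            have harg : ((N+1:ℕ):ℤ) + k = ((N:ℤ)+k)+1 := by push_cast; ring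
            rw [show (N:ℤ)+(k-1) = (N:ℤ)+k-1 by ring, show (N:ℤ)+(k+1) = (N:ℤ)+k+1 by ring,
              show (N:ℤ)-(k-1) = 2*(N:ℤ)+1-((N:ℤ)+k) by ring, harg,
              show 2*(N+1) = 2*N+2 by ring, hstep]
            ring

end Ring
end GBpart

section SeriesPart
open PowerSeries



open PowerSeries

section Series

/-- coefficientwise agreement up to (excluding) degree `D` -/
def EqF (D : ℕ) (f g : PowerSeries ℚ) : Prop :=
  ∀ d, d < D → coeff d f = coeff d g

lemma EqF.refl (D : ℕ) (f : PowerSeries ℚ) : EqF D f f := fun _ _ => rfl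

lemma EqF.symm {D f g} (h : EqF D f g) : EqF D g f := fun d hd => (h d hd).symm

lemma EqF.trans {D f g h} (h1 : EqF D f g) (h2 : EqF D g h) : EqF D f h :=
  fun d hd => (h1 d hd).trans (h2 d hd)

lemma EqF.mul {D f g f' g'} (h : EqF D f g) (h' : EqF D f' g') : EqF D (f * f') (g * g') := by
  intro d hd
  rw [PowerSeries.coeff_mul, PowerSeries.coeff_mul]
  apply Finset.sum_congr rfl
  intro x hx
  rw [Finset.HasAntidiagonal.mem_antidiagonal] at hx
  rw [h x.1 (by omega : x.1 < D), h' x.2 (by omega : x.2 < D)]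

lemma EqF.cancel {D : ℕ} {f g u : PowerSeries ℚ} (hu : constantCoeff u ≠ 0)
    (h : EqF D (f * u) (g * u)) : EqF D f g := by
  have hinv : u * u⁻¹ = 1 := PowerSeries.mul_inv_cancel u hu
  have h2 := h.mul (EqF.refl D u⁻¹)
  rw [mul_assoc, mul_assoc, hinv, mul_one, mul_one] at h2
  exact h2

lemma coeff_mul_X_pow_zero (f : PowerSeries ℚ) {e d : ℕ} (h : d < e) :
    coeff d ((PowerSeries.X : PowerSeries ℚ) ^ e * f) = 0 := by
  rw [PowerSeries.coeff_mul]
  apply Finset.sum_eq_zero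
  intro x hx
  rw [Finset.HasAntidiagonal.mem_antidiagonal] at hx
  rw [PowerSeries.coeff_X_pow, if_neg (by omega)]
  exact zero_mul _

lemma coeff_X_pow_mul_big (f : PowerSeries ℚ) (e d : ℕ) :
    coeff d ((PowerSeries.X : PowerSeries ℚ) ^ e * f) = if e ≤ d then coeff (d - e) f else 0 := by
  split_ifs with h
  · conv_lhs => rw [show d = (d - e) + e by omega]
    rw [PowerSeries.coeff_X_pow_mul]
  · exact coeff_mul_X_pow_zero f (by omega)

/-- `∏_{j=0}^{M-1} (1 - X^(c(j+1)))` -/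
noncomputable def Zpo (c M : ℕ) : PowerSeries ℚ :=
  ∏ j ∈ range M, (1 - (PowerSeries.X : PowerSeries ℚ) ^ (c*(j+1)))

lemma Zpo_succ (c M : ℕ) : Zpo c (M+1) = Zpo c M * (1 - (PowerSeries.X : PowerSeries ℚ) ^ (c*(M+1))) :=
  Finset.prod_range_succ _ _

lemma Zpo_eq_aeval (c M : ℕ) : Zpo c M
    = Polynomial.eval₂ (Int.castRingHom (PowerSeries ℚ)) ((PowerSeries.X)^c : PowerSeries ℚ) (pp M) := by
  rw [Zpo, pp, ← Polynomial.coe_eval₂RingHom, map_prod]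
  apply Finset.prod_congr rfl
  intro j _
  rw [map_sub, map_one, map_pow, Polynomial.coe_eval₂RingHom, Polynomial.eval₂_X, ← pow_mul]

lemma constantCoeff_Zpo (c M : ℕ) (hc : 1 ≤ c) : constantCoeff (Zpo c M) = 1 := by
  rw [Zpo, map_prod]
  apply Finset.prod_eq_one
  intro j _
  rw [map_sub, map_one, map_pow, PowerSeries.constantCoeff_X, zero_pow (by positivity), sub_zero]

lemma Zpo_stable (c : ℕ) (hc : 1 ≤ c) (m₀ : ℕ) :
    ∀ L, m₀ ≤ L → EqF (c*(m₀+1)) (Zpo c L) (Zpo c m₀) := by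
  intro L
  induction L with
  | zero => intro h; rw [Nat.le_zero.mp h]; exact EqF.refl _ _
  | succ L ih =>
      intro h
      rcases Nat.eq_or_lt_of_le h with h1 | h1
      · rw [h1]; exact EqF.refl _ _
      · have hL : m₀ ≤ L := by omega
        refine EqF.trans ?_ (ih hL)
        intro d hd
        rw [Zpo_succ, mul_sub, mul_one]
        rw [map_sub]
        have : coeff d (Zpo c L * (PowerSeries.X : PowerSeries ℚ) ^ (c*(L+1))) = 0 := by
          rw [mul_comm]
          exact coeff_mul_X_pow_zero _ (by nlinarith)
        rw [this, sub_zero]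

/-- Key cancellation: `gb(2M, M+k)` evaluated at `X^c` times `Zpo c M` is `1` up to
degree `c*(M - |k| + 1)`. -/
lemma key_lemma (c : ℕ) (hc : 1 ≤ c) (M : ℕ) (k : ℤ) (hk : k.natAbs ≤ M) :
    EqF (c*((M - k.natAbs)+1)) (gbe ((PowerSeries.X)^c : PowerSeries ℚ) (2*M) ((M:ℤ)+k) * Zpo c M) 1 := by
  set m₀ : ℕ := M - k.natAbs with hm₀
  set D : ℕ := c*(m₀+1) with hD
  set ra : ℕ := ((M:ℤ)+k).toNat with hra
  have hra' : ((ra:ℕ):ℤ) = (M:ℤ)+k := by rw [hra]; omega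
  have hram : ra ≤ 2*M := by omega
  have hfact := congrArg
    (Polynomial.eval₂RingHom (Int.castRingHom (PowerSeries ℚ)) ((PowerSeries.X)^c : PowerSeries ℚ))
    (gb_fact (2*M) ra hram)
  rw [Polynomial.coe_eval₂RingHom] at hfact
  rw [Polynomial.eval₂_mul, Polynomial.eval₂_mul] at hfact
  rw [← Zpo_eq_aeval, ← Zpo_eq_aeval, ← Zpo_eq_aeval, hra'] at hfact
  have hfact' : gbe ((PowerSeries.X)^c : PowerSeries ℚ) (2*M) ((M:ℤ)+k)
      * (Zpo c ra * Zpo c (2*M - ra)) = Zpo c (2*M) := by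
    rw [gbe]; exact hfact
  have s1 : EqF D (Zpo c M) (Zpo c m₀) := Zpo_stable c hc m₀ M (by omega)
  have s2 : EqF D (Zpo c ra) (Zpo c m₀) := Zpo_stable c hc m₀ ra (by omega)
  have s3 : EqF D (Zpo c (2*M - ra)) (Zpo c m₀) := Zpo_stable c hc m₀ (2*M - ra) (by omega)
  have s4 : EqF D (Zpo c (2*M)) (Zpo c m₀) := Zpo_stable c hc m₀ (2*M) (by omega)
  set B : PowerSeries ℚ := gbe ((PowerSeries.X)^c : PowerSeries ℚ) (2*M) ((M:ℤ)+k) with hB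
  have main : EqF D ((B * Zpo c M) * Zpo c M) (1 * Zpo c M) := by
    have t1 : EqF D ((B * Zpo c M) * Zpo c M) (B * (Zpo c ra * Zpo c (2*M - ra))) := by
      have := (EqF.refl D B).mul (s1.mul s1)
      have h2 := (EqF.refl D B).mul ((s2.mul s3).symm)
      refine EqF.trans ?_ (this.trans h2)
      intro d hd; congr 1; ring
    have t2 : EqF D (B * (Zpo c ra * Zpo c (2*M - ra))) (Zpo c M) := by
      rw [hB, hfact']
      exact s4.trans s1.symm
    refine (t1.trans t2).trans ?_
    intro d hd; rw [one_mul]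
  exact EqF.cancel (by rw [constantCoeff_Zpo c M hc]; norm_num) main

end Series


end SeriesPart

section GFpart
open PowerSeries
open scoped Classical

universe u
variable {α : Type*}
variable {ι : Type u}
open Finset.HasAntidiagonal

/-- A convenience constructor for the power series whose coefficients indicate a subset. -/
noncomputable def indicatorSeries (α : Type*) [Semiring α] (s : Set ℕ) : PowerSeries α :=
  PowerSeries.mk fun n => if n ∈ s then 1 else 0

theorem coeff_indicator (s : Set ℕ) [Semiring α] (n : ℕ) :
    coeff (R := α) n (indicatorSeries _ s) = if n ∈ s then 1 else 0 :=
  coeff_mk _ _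

theorem coeff_indicator_pos (s : Set ℕ) [Semiring α] (n : ℕ) (h : n ∈ s) :
    coeff (R := α) n (indicatorSeries _ s) = 1 := by rw [coeff_indicator, if_pos h]

theorem coeff_indicator_neg (s : Set ℕ) [Semiring α] (n : ℕ) (h : n ∉ s) :
    coeff (R := α) n (indicatorSeries _ s) = 0 := by rw [coeff_indicator, if_neg h]

theorem constantCoeff_indicator (s : Set ℕ) [Semiring α] :
    constantCoeff (R := α) (indicatorSeries _ s) = if 0 ∈ s then 1 else 0 :=
  rfl

theorem two_series (i : ℕ) [Semiring α] :
    1 + (X : PowerSeries α) ^ i.succ = indicatorSeries α {0, i.succ} := by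
  ext n
  simp only [coeff_indicator, coeff_one, coeff_X_pow, Set.mem_insert_iff, Set.mem_singleton_iff,
    map_add]
  cases' n with d
  · simp [(Nat.succ_ne_zero i).symm]
  · simp [Nat.succ_ne_zero d]

theorem num_series' [Field α] (i : ℕ) :
    (1 - (X : PowerSeries α) ^ (i + 1))⁻¹ = indicatorSeries α {k | i + 1 ∣ k} := by
  rw [PowerSeries.inv_eq_iff_mul_eq_one]
  · ext n
    rw [mul_sub, mul_one, map_sub, PowerSeries.coeff_mul_X_pow', coeff_indicator, coeff_indicator,
      coeff_one]
    simp only [Set.mem_setOf_eq]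
    rcases Nat.eq_zero_or_pos n with rfl | hn
    · simp
    · rw [if_neg (by omega : n ≠ 0)]
      by_cases hle : i + 1 ≤ n
      · rw [if_pos hle]
        by_cases h : i + 1 ∣ n
        · have h' : i + 1 ∣ n - (i+1) := by
            obtain ⟨c, hc⟩ := h
            exact ⟨c - 1, by rw [hc, Nat.mul_sub_one]⟩
          rw [if_pos h, if_pos h', sub_self]
        · have h' : ¬ i + 1 ∣ n - (i+1) := by
            rintro ⟨c, hc⟩
            exact h ⟨c + 1, by rw [Nat.mul_succ]; omega⟩
          rw [if_neg h, if_neg h', sub_self]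
      · rw [if_neg hle, if_neg (fun h => hle (Nat.le_of_dvd hn h)), sub_zero]
  · simp [zero_pow]

-- The main workhorse of the partition theorem proof.
theorem partialGF_prop (α : Type*) [CommSemiring α] (n : ℕ) (s : Finset ℕ) (hs : ∀ i ∈ s, 0 < i)
    (c : ℕ → Set ℕ) (hc : ∀ i, i ∉ s → 0 ∈ c i) :
    #{p : n.Partition | (∀ j, p.parts.count j ∈ c j) ∧ ∀ j ∈ p.parts, j ∈ s} =
      coeff (R := α) n (∏ i ∈ s, indicatorSeries α ((· * i) '' c i)) := by
  simp_rw [coeff_prod, coeff_indicator, prod_boole, sum_boole]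
  apply congr_arg
  simp only [mem_univ, forall_true_left, not_and, not_forall, exists_prop,
    Set.mem_image, not_exists]
  set φ : (a : Nat.Partition n) →
    a ∈ filter (fun p ↦ (∀ (j : ℕ), Multiset.count j p.parts ∈ c j) ∧ ∀ j ∈ p.parts, j ∈ s) univ →
    ℕ →₀ ℕ := fun p _ => {
      toFun := fun i => Multiset.count i p.parts • i
      support := Finset.filter (fun i => i ≠ 0) p.parts.toFinset
      mem_support_toFun := fun a => by
        simp only [smul_eq_mul, ne_eq, mul_eq_zero, Multiset.count_eq_zero]
        rw [not_or, not_not]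
        simp only [Multiset.mem_toFinset, not_not, mem_filter] }
  refine Finset.card_bij φ ?_ ?_ ?_
  · intro a ha
    simp only [φ, not_forall, not_exists, not_and, exists_prop, mem_filter]
    rw [mem_finsuppAntidiag]
    dsimp only [ne_eq, smul_eq_mul, id_eq, eq_mpr_eq_cast, le_eq_subset, Finsupp.coe_mk]
    simp only [mem_univ, forall_true_left, not_and, not_forall, exists_prop,
      mem_filter, true_and] at ha
    refine ⟨⟨?_, fun i ↦ ?_⟩, fun i _ ↦ ⟨a.parts.count i, ha.1 i, rfl⟩⟩
    · conv_rhs => simp [← a.parts_sum]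
      rw [sum_multiset_count_of_subset _ s]
      · simp only [smul_eq_mul]
      · intro i
        simp only [Multiset.mem_toFinset, not_not, mem_filter]
        apply ha.2
    · simp only [ne_eq, Multiset.mem_toFinset, not_not, mem_filter, and_imp]
      exact fun hi _ ↦ ha.2 i hi
  · intro p₁ hp₁ p₂ hp₂ h
    apply Nat.Partition.ext
    simp only [true_and, mem_univ, mem_filter] at hp₁ hp₂
    ext i
    simp only [φ, ne_eq, Multiset.mem_toFinset, not_not, smul_eq_mul, Finsupp.mk.injEq] at h
    by_cases hi : i = 0
    · rw [hi]
      rw [Multiset.count_eq_zero_of_notMem]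
      · rw [Multiset.count_eq_zero_of_notMem]
        intro a; exact Nat.lt_irrefl 0 (hs 0 (hp₂.2 0 a))
      intro a; exact Nat.lt_irrefl 0 (hs 0 (hp₁.2 0 a))
    · rw [← mul_left_inj' hi]
      rw [funext_iff] at h
      exact h.2 i
  · simp only [φ, mem_filter, mem_finsuppAntidiag, mem_univ, exists_prop, true_and, and_assoc]
    rintro f ⟨hf, hf₃, hf₄⟩
    have hf' : f ∈ finsuppAntidiag s n := mem_finsuppAntidiag.mpr ⟨hf, hf₃⟩
    simp only [mem_finsuppAntidiag] at hf'
    refine ⟨⟨∑ i ∈ s, Multiset.replicate (f i / i) i, ?_, ?_⟩, ?_, ?_, ?_⟩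
    · intro i hi
      simp only [exists_prop, Multiset.mem_sum, mem_map, Function.Embedding.coeFn_mk] at hi
      rcases hi with ⟨t, ht, z⟩
      apply hs
      rwa [Multiset.eq_of_mem_replicate z]
    · simp_rw [Multiset.sum_sum, Multiset.sum_replicate, Nat.nsmul_eq_mul]
      rw [← hf'.1]
      refine sum_congr rfl fun i hi => Nat.div_mul_cancel ?_
      rcases hf₄ i hi with ⟨w, _, hw₂⟩
      rw [← hw₂]
      exact dvd_mul_left _ _
    · intro i
      simp_rw [Multiset.count_sum', Multiset.count_replicate, sum_ite_eq']
      split_ifs with h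
      · rcases hf₄ i h with ⟨w, hw₁, hw₂⟩
        rwa [← hw₂, Nat.mul_div_cancel _ (hs i h)]
      · exact hc _ h
    · intro i hi
      rw [Multiset.mem_sum] at hi
      rcases hi with ⟨j, hj₁, hj₂⟩
      rwa [Multiset.eq_of_mem_replicate hj₂]
    · ext i
      simp_rw [Multiset.count_sum', Multiset.count_replicate, sum_ite_eq']
      simp only [ne_eq, Multiset.mem_toFinset, not_not, smul_eq_mul, ite_mul,
        zero_mul, Finsupp.coe_mk]
      split_ifs with h
      · apply Nat.div_mul_cancel
        rcases hf₄ i h with ⟨w, _, hw₂⟩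
        apply Dvd.intro_left _ hw₂
      · apply symm
        rw [← Finsupp.notMem_support_iff]
        exact notMem_mono hf'.2 h




noncomputable def sN (N : ℕ) : Finset ℕ :=
  ((range N).map ⟨fun j => 5*j+1, fun a b h => by simp only at h; omega⟩) ∪
  ((range N).map ⟨fun j => 5*j+4, fun a b h => by simp only at h; omega⟩)

lemma mem_sN {N i : ℕ} : i ∈ sN N ↔ (∃ j < N, 5*j+1 = i) ∨ (∃ j < N, 5*j+4 = i) := by
  simp [sN, Finset.mem_union, Finset.mem_map, Finset.mem_range, Function.Embedding.coeFn_mk]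
  rfl

lemma sN_pos (N : ℕ) : ∀ i ∈ sN N, 0 < i := by
  intro i hi
  rw [mem_sN] at hi
  rcases hi with ⟨j, _, rfl⟩ | ⟨j, _, rfl⟩ <;> omega

lemma mem_sN_iff_pred {N i : ℕ} (h1 : 1 ≤ i) (h2 : i ≤ 5*N) :
    i ∈ sN N ↔ (i % 5 = 1 ∨ i % 5 = 4) := by
  rw [mem_sN]
  constructor
  · rintro (⟨j, _, rfl⟩ | ⟨j, _, rfl⟩) <;> omega
  · rintro (h | h)
    · exact Or.inl ⟨i/5, by omega, by omega⟩
    · exact Or.inr ⟨i/5, by omega, by omega⟩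

theorem gf_p14 (n N : ℕ) (h : n < 5*N) :
    ((restrictedPartitionCount (fun i => i % 5 = 1 ∨ i % 5 = 4) n : ℕ) : ℚ)
      = coeff n (∏ i ∈ sN N, (1 - (X : PowerSeries ℚ)^i)⁻¹) := by
  have hGF := partialGF_prop ℚ n (sN N) (sN_pos N) (fun _ => Set.univ) (fun _ _ => trivial)
  have hprod : ∏ i ∈ sN N, indicatorSeries ℚ ((· * i) '' Set.univ)
      = ∏ i ∈ sN N, (1 - (X : PowerSeries ℚ)^i)⁻¹ := by
    apply Finset.prod_congr rfl
    intro i hi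
    have hi1 : 1 ≤ i := sN_pos N i hi
    have hnum : (1 - (X:PowerSeries ℚ)^i)⁻¹ = indicatorSeries ℚ {k | i ∣ k} := by
      have := num_series' (α := ℚ) (i-1)
      rwa [Nat.sub_add_cancel hi1] at this
    have hset : ((· * i) '' Set.univ : Set ℕ) = {k | i ∣ k} := by
      ext k
      constructor
      · rintro ⟨p, -, rfl⟩; exact Dvd.intro_left p rfl
      · rintro ⟨p, rfl⟩; exact ⟨p, trivial, mul_comm p i⟩
    rw [hset, hnum]
  rw [hprod] at hGF
  rw [← hGF]
  norm_cast
  rw [restrictedPartitionCount, Fintype.card_subtype]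
  congr 1
  apply Finset.filter_congr
  intro p _
  have hparts : ∀ j ∈ p.parts, 1 ≤ j ∧ j ≤ n := by
    intro j hj
    constructor
    · exact p.parts_pos hj
    · have := Multiset.single_le_sum (fun a (_ : a ∈ p.parts) => Nat.zero_le a) j hj
      rwa [p.parts_sum] at this
  constructor
  · intro hp
    refine ⟨fun j => Set.mem_univ _, fun j hj => ?_⟩
    exact (mem_sN_iff_pred (hparts j hj).1 (by have := (hparts j hj).2; omega)).mpr (hp j hj)
  · rintro ⟨-, hp⟩ j hj
    exact (mem_sN_iff_pred (hparts j hj).1 (by have := (hparts j hj).2; omega)).mp (hp j hj)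

noncomputable def P14s : PowerSeries ℚ :=
  PowerSeries.mk fun d => ((restrictedPartitionCount (fun i => i % 5 = 1 ∨ i % 5 = 4) d : ℕ) : ℚ)

lemma constCoeff_one_sub_X_pow (i : ℕ) (hi : 1 ≤ i) :
    constantCoeff (1 - (X : PowerSeries ℚ)^i) = 1 := by
  rw [map_sub, map_one, map_pow, constantCoeff_X, zero_pow (by omega), sub_zero]

lemma EsInv (N : ℕ) :
    (∏ i ∈ sN N, (1 - (X : PowerSeries ℚ)^i)⁻¹) * (∏ i ∈ sN N, (1 - (X : PowerSeries ℚ)^i)) = 1 := by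
  rw [← Finset.prod_mul_distrib]
  apply Finset.prod_eq_one
  intro i hi
  exact PowerSeries.inv_mul_cancel _ (by rw [constCoeff_one_sub_X_pow i (sN_pos N i hi)]; norm_num)

lemma Es_eq (N : ℕ) : (∏ i ∈ sN N, (1 - (X : PowerSeries ℚ)^i))
    = ∏ j ∈ range N, ((1 - (X:PowerSeries ℚ)^(5*j+1)) * (1 - (X:PowerSeries ℚ)^(5*j+4))) := by
  rw [sN, Finset.prod_union (by
    rw [Finset.disjoint_left]
    intro a ha hb
    simp only [Finset.mem_map, Finset.mem_range, Function.Embedding.coeFn_mk] at ha hb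
    obtain ⟨x, _, hx⟩ := ha
    obtain ⟨y, _, hy⟩ := hb
    change 5*x+1 = a at hx
    change 5*y+4 = a at hy
    omega)]
  rw [Finset.prod_map, Finset.prod_map, ← Finset.prod_mul_distrib]
  rfl

lemma P14_Es (n N : ℕ) (h : n < 5*N) :
    EqF (n+1) (P14s * ∏ j ∈ range N, ((1 - (X:PowerSeries ℚ)^(5*j+1)) * (1 - (X:PowerSeries ℚ)^(5*j+4)))) 1 := by
  have h1 : EqF (n+1) P14s (∏ i ∈ sN N, (1 - (X : PowerSeries ℚ)^i)⁻¹) := by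
    intro d hd
    rw [P14s, coeff_mk]
    exact gf_p14 d N (by omega)
  have h2 := h1.mul (EqF.refl (n+1) (∏ i ∈ sN N, (1 - (X : PowerSeries ℚ)^i)))
  rw [EsInv N] at h2
  rw [← Es_eq]
  exact h2

end GFpart

section SpecPart
open PowerSeries

/-- exponent `a·k(k+1)/2 + b·k(k-1)/2` as a natural number -/
def Eab (a b : ℕ) (k : ℤ) : ℕ := a * (k*(k+1)/2).toNat + b * (k*(k-1)/2).toNat

lemma Eab_cast (a b : ℕ) (k : ℤ) :
    ((Eab a b k : ℕ) : ℤ) = (a:ℤ) * (k*(k+1)/2) + (b:ℤ) * (k*(k-1)/2) := by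
  obtain ⟨a1, a2⟩ := half_succ k
  obtain ⟨b1, b2⟩ := half_pred k
  have c1 : (((k*(k+1)/2).toNat : ℕ) : ℤ) = k*(k+1)/2 := by omega
  have c2 : (((k*(k-1)/2).toNat : ℕ) : ℤ) = k*(k-1)/2 := by omega
  rw [Eab]
  push_cast
  rw [c1, c2]

lemma negpow (a i : ℕ) : (-((X:PowerSeries ℚ)^a))^i = PowerSeries.C ((-1:ℚ)^i) * X^(a*i) := by
  rw [neg_pow, ← pow_mul]
  congr 1
  rw [map_pow, map_neg, map_one]

lemma spec_mu (a b : ℕ) (k : ℤ) :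
    mu (-((X:PowerSeries ℚ)^a)) (-((X:PowerSeries ℚ)^b)) k
      = PowerSeries.C ((-1:ℚ)^(k.natAbs)) * X^(Eab a b k) := by
  rw [mu, negpow, negpow]
  have habs : (k*(k+1)/2).toNat + (k*(k-1)/2).toNat = k.natAbs * k.natAbs := by
    obtain ⟨a1, a2⟩ := half_succ k
    obtain ⟨b1, b2⟩ := half_pred k
    have h2 : (k.natAbs * k.natAbs : ℤ) = k * k := Int.natAbs_mul_self' k
    have h3 : k*(k+1) + k*(k-1) = 2*(k*k) := by ring
    omega
  have hsign : ((-1:ℚ)^((k*(k+1)/2).toNat)) * ((-1:ℚ)^((k*(k-1)/2).toNat)) = (-1:ℚ)^(k.natAbs) := by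
    rw [← pow_add, habs]
    rcases Nat.even_or_odd k.natAbs with he | ho
    · rw [(he.mul_right _).neg_one_pow, he.neg_one_pow]
    · rw [(ho.mul ho).neg_one_pow, ho.neg_one_pow]
  calc PowerSeries.C ((-1:ℚ)^((k*(k+1)/2).toNat)) * X^(a*(k*(k+1)/2).toNat)
        * (PowerSeries.C ((-1:ℚ)^((k*(k-1)/2).toNat)) * X^(b*(k*(k-1)/2).toNat))
      = (PowerSeries.C ((-1:ℚ)^((k*(k+1)/2).toNat)) * PowerSeries.C ((-1:ℚ)^((k*(k-1)/2).toNat)))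
        * (X^(a*(k*(k+1)/2).toNat) * X^(b*(k*(k-1)/2).toNat)) := by ring
    _ = PowerSeries.C ((-1:ℚ)^(k.natAbs)) * X^(Eab a b k) := by
        rw [← map_mul, hsign, ← pow_add, Eab]

lemma spec_mul_neg (a b : ℕ) :
    (-((X:PowerSeries ℚ)^a)) * (-((X:PowerSeries ℚ)^b)) = X^(a+b) := by
  rw [neg_mul_neg, ← pow_add]

theorem specJTP (a b : ℕ) (N : ℕ) :
    ∏ j ∈ range N, ((1 - (X:PowerSeries ℚ)^(a*(j+1)+b*j)) * (1 - (X:PowerSeries ℚ)^(a*j+b*(j+1))))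
    = ∑ k ∈ Icc (-(N:ℤ)) (N:ℤ),
        PowerSeries.C ((-1:ℚ)^(k.natAbs)) * (X:PowerSeries ℚ)^(Eab a b k)
          * gbe ((X:PowerSeries ℚ)^(a+b)) (2*N) ((N:ℤ)+k) := by
  have h := finJTP (-((X:PowerSeries ℚ)^a)) (-((X:PowerSeries ℚ)^b)) N
  have hL : ∀ j : ℕ, (1 + (-((X:PowerSeries ℚ)^a))^(j+1) * (-((X:PowerSeries ℚ)^b))^j)
      * (1 + (-((X:PowerSeries ℚ)^a))^j * (-((X:PowerSeries ℚ)^b))^(j+1))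
      = (1 - (X:PowerSeries ℚ)^(a*(j+1)+b*j)) * (1 - (X:PowerSeries ℚ)^(a*j+b*(j+1))) := by
    intro j
    rw [negpow, negpow, negpow, negpow]
    have s1 : ((-1:ℚ)^(j+1)) * ((-1:ℚ)^j) = -1 := by
      rw [← pow_add]
      have hodd : Odd (j + 1 + j) := by rw [Nat.odd_iff]; omega
      rw [hodd.neg_one_pow]
    have e1 : PowerSeries.C ((-1:ℚ)^(j+1)) * X^(a*(j+1)) * (PowerSeries.C ((-1:ℚ)^j) * X^(b*j))
        = - (X:PowerSeries ℚ)^(a*(j+1)+b*j) := by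
      calc PowerSeries.C ((-1:ℚ)^(j+1)) * X^(a*(j+1)) * (PowerSeries.C ((-1:ℚ)^j) * X^(b*j))
          = PowerSeries.C (((-1:ℚ)^(j+1)) * ((-1:ℚ)^j)) * (X^(a*(j+1)) * X^(b*j)) := by
            rw [map_mul]; ring
        _ = - (X:PowerSeries ℚ)^(a*(j+1)+b*j) := by
            rw [s1, ← pow_add, map_neg, map_one]; ring
    have e2 : PowerSeries.C ((-1:ℚ)^j) * X^(a*j) * (PowerSeries.C ((-1:ℚ)^(j+1)) * X^(b*(j+1)))
        = - (X:PowerSeries ℚ)^(a*j+b*(j+1)) := by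
      calc PowerSeries.C ((-1:ℚ)^j) * X^(a*j) * (PowerSeries.C ((-1:ℚ)^(j+1)) * X^(b*(j+1)))
          = PowerSeries.C (((-1:ℚ)^(j+1)) * ((-1:ℚ)^j)) * (X^(a*j) * X^(b*(j+1))) := by
            rw [map_mul]; ring
        _ = - (X:PowerSeries ℚ)^(a*j+b*(j+1)) := by
            rw [s1, ← pow_add, map_neg, map_one]; ring
    rw [e1, e2]
    ring
  rw [Finset.prod_congr rfl (fun j _ => hL j)] at h
  rw [h]
  apply Finset.sum_congr rfl
  intro k _
  rw [spec_mu, spec_mul_neg]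

end SpecPart

section MainPart
open PowerSeries

lemma even_helper1 (k : ℤ) : Even (k*(5*k+3)) := by
  obtain ⟨c, hc⟩ := Int.even_mul_succ_self k
  exact ⟨2*k*k + k + c, by linear_combination hc⟩

lemma even_helper2 (k : ℤ) : Even (k*(3*k+1)) := by
  obtain ⟨c, hc⟩ := Int.even_mul_succ_self k
  exact ⟨k*k + c, by linear_combination hc⟩

lemma Eab41_cast (k : ℤ) : ((Eab 4 1 k : ℕ) : ℤ) = heptQZ k := by
  obtain ⟨a1, a2⟩ := half_succ k
  obtain ⟨b1, b2⟩ := half_pred k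
  have hq := Int.two_mul_ediv_two_of_even (even_helper1 k)
  have hr : 4*(k*(k+1)) + k*(k-1) = k*(5*k+3) := by ring
  rw [Eab_cast, heptQZ]
  omega

lemma Eab105_cast (k : ℤ) : ((Eab 10 5 k : ℕ) : ℤ) = 5 * pentQZ k := by
  obtain ⟨a1, a2⟩ := half_succ k
  obtain ⟨b1, b2⟩ := half_pred k
  have hq := Int.two_mul_ediv_two_of_even (even_helper2 k)
  have hr : 10*(k*(k+1)) + 5*(k*(k-1)) = 5*(k*(3*k+1)) := by ring
  rw [Eab_cast, pentQZ]
  omega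

lemma bnd1 (k : ℤ) (n : ℕ) (hn : 1 ≤ n) (h : Eab 4 1 k ≤ n) : k.natAbs ≤ n := by
  rcases Nat.eq_zero_or_pos k.natAbs with h0 | h0
  · omega
  · have hc := Eab41_cast k
    rw [heptQZ] at hc
    have hq := Int.two_mul_ediv_two_of_even (even_helper1 k)
    have h' : ((Eab 4 1 k : ℕ):ℤ) ≤ (n:ℤ) := by exact_mod_cast h
    have hk2 : ((k.natAbs:ℤ)) * ((k.natAbs:ℤ)) = k * k := Int.natAbs_mul_self' k
    have habs1 : k ≤ (k.natAbs:ℤ) := Int.le_natAbs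
    have habs2 : -((k.natAbs:ℤ)) ≤ k := by omega
    have h1' : (1:ℤ) ≤ (k.natAbs:ℤ) := by exact_mod_cast h0
    have hn' : (1:ℤ) ≤ (n:ℤ) := by exact_mod_cast hn
    have : (k.natAbs:ℤ) ≤ (n:ℤ) := by nlinarith
    exact_mod_cast this

lemma bnd2 (k : ℤ) (n : ℕ) (h : Eab 10 5 k ≤ n) : 5 * k.natAbs ≤ n := by
  rcases Nat.eq_zero_or_pos k.natAbs with h0 | h0
  · omega
  · have hc := Eab105_cast k
    rw [pentQZ] at hc
    have hq := Int.two_mul_ediv_two_of_even (even_helper2 k)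
    have h' : ((Eab 10 5 k : ℕ):ℤ) ≤ (n:ℤ) := by exact_mod_cast h
    have hk2 : ((k.natAbs:ℤ)) * ((k.natAbs:ℤ)) = k * k := Int.natAbs_mul_self' k
    have habs1 : k ≤ (k.natAbs:ℤ) := Int.le_natAbs
    have habs2 : -((k.natAbs:ℤ)) ≤ k := by omega
    have h1' : (1:ℤ) ≤ (k.natAbs:ℤ) := by exact_mod_cast h0
    have : 5*(k.natAbs:ℤ) ≤ (n:ℤ) := by nlinarith
    exact_mod_cast this

lemma coeff_spec_sum (n : ℕ) (s : Finset ℤ) (E : ℤ → ℕ) (sg : ℤ → ℚ) (W : ℤ → PowerSeries ℚ) :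
    coeff n (∑ k ∈ s, PowerSeries.C (sg k) * (X:PowerSeries ℚ)^(E k) * W k)
    = ∑ k ∈ s, sg k * (if E k ≤ n then coeff (n - E k) (W k) else 0) := by
  rw [map_sum]
  apply Finset.sum_congr rfl
  intro k _
  rw [mul_assoc, PowerSeries.coeff_C_mul, coeff_X_pow_mul_big]

lemma Zpo_split (N' : ℕ) :
    Zpo 5 (3*N') = (∏ j ∈ range N', ((1 - (X:PowerSeries ℚ)^(10*(j+1)+5*j))
      * (1 - (X:PowerSeries ℚ)^(10*j+5*(j+1))))) * Zpo 15 N' := by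
  induction N' with
  | zero => simp [Zpo]
  | succ L ih =>
      have h3 : 3*(L+1) = (3*L)+1+1+1 := by ring
      rw [h3, Zpo_succ, Zpo_succ, Zpo_succ, ih, Finset.prod_range_succ, Zpo_succ]
      rw [show 5*((3*L)+1) = 10*L+5*(L+1) by ring, show 5*((3*L)+1+1) = 10*(L+1)+5*L by ring,
        show 5*((3*L)+1+1+1) = 15*(L+1) by ring]
      ring

/-- Identity 2: `coeff n (Zpo 5 (3*N'))` equals the signed pentagonal indicator sum. -/
lemma identity2 (n : ℕ) (hn : 1 ≤ n) (N' : ℕ) (hN' : n + 1 ≤ N') :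
    coeff n (Zpo 5 (3*N'))
      = ∑ k ∈ Icc (-(N':ℤ)) (N':ℤ), (-1:ℚ)^(k.natAbs) * (if n = Eab 10 5 k then 1 else 0) := by
  rw [Zpo_split, specJTP 10 5 N']
  rw [Finset.sum_mul]
  have hrw : ∀ k ∈ Icc (-(N':ℤ)) (N':ℤ),
      PowerSeries.C ((-1:ℚ)^(k.natAbs)) * (X:PowerSeries ℚ)^(Eab 10 5 k)
        * gbe ((X:PowerSeries ℚ)^(10+5)) (2*N') ((N':ℤ)+k) * Zpo 15 N'
      = PowerSeries.C ((-1:ℚ)^(k.natAbs)) * (X:PowerSeries ℚ)^(Eab 10 5 k)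
        * (gbe ((X:PowerSeries ℚ)^(10+5)) (2*N') ((N':ℤ)+k) * Zpo 15 N') := by
    intro k _; ring
  rw [Finset.sum_congr rfl hrw, coeff_spec_sum]
  apply Finset.sum_congr rfl
  intro k hk
  simp only [Finset.mem_Icc] at hk
  congr 1
  by_cases hE : Eab 10 5 k ≤ n
  · rw [if_pos hE]
    have hκ : 5 * k.natAbs ≤ n := bnd2 k n hE
    have hkey := key_lemma 15 (by norm_num) N' k (by omega)
    have hcoeff := hkey (n - Eab 10 5 k) (by omega)
    rw [show (15:ℕ) = 10+5 from rfl] at hcoeff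
    rw [hcoeff, PowerSeries.coeff_one]
    by_cases hEq : n = Eab 10 5 k
    · rw [if_pos (by omega), if_pos hEq]
    · rw [if_neg (by omega), if_neg hEq]
  · rw [if_neg hE, if_neg (by omega)]

/-- Identity 1: `coeff n (Zpo 5 N)` equals the signed sum of shifted partition counts. -/
lemma identity1 (n : ℕ) (hn : 1 ≤ n) (N : ℕ) (hN : N = 3*n+3) :
    coeff n (Zpo 5 N)
      = ∑ k ∈ Icc (-(N:ℤ)) (N:ℤ), (-1:ℚ)^(k.natAbs)
          * (if Eab 4 1 k ≤ n then coeff (n - Eab 4 1 k) P14s else 0) := by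
  have hEs : (∏ j ∈ range N, ((1 - (X:PowerSeries ℚ)^(5*j+1)) * (1 - (X:PowerSeries ℚ)^(5*j+4))))
      = ∑ k ∈ Icc (-(N:ℤ)) (N:ℤ),
          PowerSeries.C ((-1:ℚ)^(k.natAbs)) * (X:PowerSeries ℚ)^(Eab 4 1 k)
            * gbe ((X:PowerSeries ℚ)^(4+1)) (2*N) ((N:ℤ)+k) := by
    rw [← specJTP 4 1 N]
    apply Finset.prod_congr rfl
    intro j _
    rw [show 4*(j+1)+1*j = 5*j+4 by ring, show 4*j+1*(j+1) = 5*j+1 by ring]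
    ring
  have hA : P14s * (∏ j ∈ range N, ((1 - (X:PowerSeries ℚ)^(5*j+1)) * (1 - (X:PowerSeries ℚ)^(5*j+4))))
        * Zpo 5 N
      = ∑ k ∈ Icc (-(N:ℤ)) (N:ℤ),
          PowerSeries.C ((-1:ℚ)^(k.natAbs)) * (X:PowerSeries ℚ)^(Eab 4 1 k)
            * (gbe ((X:PowerSeries ℚ)^(4+1)) (2*N) ((N:ℤ)+k) * Zpo 5 N * P14s) := by
    rw [hEs, Finset.mul_sum, Finset.sum_mul]
    apply Finset.sum_congr rfl
    intro k _
    ring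
  have hB : coeff n (P14s * (∏ j ∈ range N, ((1 - (X:PowerSeries ℚ)^(5*j+1))
        * (1 - (X:PowerSeries ℚ)^(5*j+4)))) * Zpo 5 N) = coeff n (Zpo 5 N) := by
    have h1 := (P14_Es n N (by omega)).mul (EqF.refl (n+1) (Zpo 5 N))
    have h2 := h1 n (by omega)
    rw [h2, one_mul]
  rw [← hB, hA, coeff_spec_sum]
  apply Finset.sum_congr rfl
  intro k hk
  simp only [Finset.mem_Icc] at hk
  congr 1
  by_cases hE : Eab 4 1 k ≤ n
  · rw [if_pos hE, if_pos hE]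
    have hκ : k.natAbs ≤ n := bnd1 k n hn hE
    have hkey := (key_lemma 5 (by norm_num) N k (by omega)).mul (EqF.refl _ P14s)
    have hcoeff := hkey (n - Eab 4 1 k) (by omega)
    rw [one_mul] at hcoeff
    rw [show ((X:PowerSeries ℚ)^(4+1)) = (X:PowerSeries ℚ)^5 by norm_num]
    exact hcoeff
  · rw [if_neg hE, if_neg hE]

lemma pentQZ_neg (m : ℤ) : pentQZ (-m) = pentZ m := by
  rw [pentQZ, pentZ, show (-m)*(3*(-m)+1) = m*(3*m-1) by ring]

lemma heptQZ_neg (m : ℤ) : heptQZ (-m) = heptZ m := by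
  rw [heptQZ, heptZ, show (-m)*(5*(-m)+3) = m*(5*m-3) by ring]

lemma Eab105_inj {n : ℕ} {k k' : ℤ} (h : n = Eab 10 5 k) (h' : n = Eab 10 5 k') : k = k' := by
  have e : 5 * pentQZ k = 5 * pentQZ k' := by
    rw [← Eab105_cast, ← Eab105_cast, ← h, ← h']
  have e2 : pentQZ k = pentQZ k' := by omega
  rw [pentQZ, pentQZ] at e2
  have hq := Int.two_mul_ediv_two_of_even (even_helper2 k)
  have hq' := Int.two_mul_ediv_two_of_even (even_helper2 k')
  have e3 : k*(3*k+1) = k'*(3*k'+1) := by omega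
  have e4 : (k - k') * (3*(k+k')+1) = 0 := by linear_combination e3
  rcases mul_eq_zero.mp e4 with h5 | h5
  · omega
  · omega

/-- Evaluation of the pentagonal indicator sum as `M`. -/
lemma pent_sum_eval (n : ℕ) (hn : 1 ≤ n) (M : ℤ)
    (hM1 : ∀ m : ℕ, 1 ≤ m → ((n : ℤ) = 5 * pentZ m ∨ (n : ℤ) = 5 * pentQZ m) → M = (-1) ^ m)
    (hM0 : (∀ m : ℕ, 1 ≤ m → (n : ℤ) ≠ 5 * pentZ m ∧ (n : ℤ) ≠ 5 * pentQZ m) → M = 0)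
    (N' : ℕ) (hN' : n + 1 ≤ N') :
    ∑ k ∈ Icc (-(N':ℤ)) (N':ℤ), (-1:ℚ)^(k.natAbs) * (if n = Eab 10 5 k then 1 else 0)
      = (M : ℚ) := by
  by_cases hex : ∃ k : ℤ, n = Eab 10 5 k
  · obtain ⟨k₀, hk₀⟩ := hex
    have hκpos : 1 ≤ k₀.natAbs := by
      rcases Nat.eq_zero_or_pos k₀.natAbs with h0 | h0
      · exfalso
        have : k₀ = 0 := by omega
        rw [this] at hk₀
        have : Eab 10 5 0 = 0 := by simp [Eab]
        omega
      · omega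
    have hκn : 5 * k₀.natAbs ≤ n := bnd2 k₀ n (by omega)
    have hmem : k₀ ∈ Icc (-(N':ℤ)) (N':ℤ) := by
      simp only [Finset.mem_Icc]
      omega
    rw [Finset.sum_eq_single k₀ (fun k _ hne => by
        rw [if_neg (fun hEq => hne (Eab105_inj hEq hk₀)), mul_zero])
      (fun habs => absurd hmem habs)]
    rw [if_pos hk₀, mul_one]
    have hM : M = (-1)^(k₀.natAbs) := by
      apply hM1 k₀.natAbs hκpos
      rcases Int.natAbs_eq k₀ with he | he
      · right
        rw [show ((k₀.natAbs:ℕ):ℤ) = k₀ from he.symm]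
        rw [← Eab105_cast, ← hk₀]
      · left
        have : 5 * pentZ (k₀.natAbs:ℤ) = 5 * pentQZ k₀ := by
          rw [← pentQZ_neg, ← he]
        rw [this, ← Eab105_cast, ← hk₀]
    rw [hM]
    push_cast
    ring
  · push_neg at hex
    rw [Finset.sum_eq_zero (fun k _ => by rw [if_neg (hex k), mul_zero])]
    have hM : M = 0 := by
      apply hM0
      intro m hm
      constructor
      · intro hcon
        apply hex (-(m:ℤ))
        have : ((Eab 10 5 (-(m:ℤ)) : ℕ):ℤ) = (n:ℤ) := by
          rw [Eab105_cast, pentQZ_neg, ← hcon]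
        omega
      · intro hcon
        apply hex ((m:ℤ))
        have : ((Eab 10 5 ((m:ℤ)) : ℕ):ℤ) = (n:ℤ) := by
          rw [Eab105_cast, ← hcon]
        omega
    rw [hM]
    norm_num

/-- The master recurrence over `ℤ`, summed over a symmetric interval. -/
lemma master (n : ℕ) (hn : 1 ≤ n) (M : ℤ)
    (hM1 : ∀ m : ℕ, 1 ≤ m → ((n : ℤ) = 5 * pentZ m ∨ (n : ℤ) = 5 * pentQZ m) → M = (-1) ^ m)
    (hM0 : (∀ m : ℕ, 1 ≤ m → (n : ℤ) ≠ 5 * pentZ m ∧ (n : ℤ) ≠ 5 * pentQZ m) → M = 0) :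
    ∑ k ∈ Icc (-(3*(n:ℤ)+3)) (3*(n:ℤ)+3),
      (-1:ℤ)^(k.natAbs) * p14Z ((n:ℤ) - heptQZ k) = M := by
  have hN : (3*n+3 : ℕ) = 3*(n+1) := by ring
  have hid1 := identity1 n hn (3*n+3) rfl
  have hid2 := identity2 n hn (n+1) (le_refl _)
  rw [show 3*(n+1) = 3*n+3 by ring] at hid2
  have hpent := pent_sum_eval n hn M hM1 hM0 (n+1) (le_refl _)
  have hQ : ∑ k ∈ Icc (-((3*n+3:ℕ):ℤ)) ((3*n+3:ℕ):ℤ), (-1:ℚ)^(k.natAbs)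
      * (if Eab 4 1 k ≤ n then coeff (n - Eab 4 1 k) P14s else 0) = (M:ℚ) := by
    rw [← hid1, hid2, hpent]
  -- cast: each ℚ-term is the cast of the ℤ-term
  have hterm : ∀ k ∈ Icc (-((3*n+3:ℕ):ℤ)) ((3*n+3:ℕ):ℤ),
      (((-1:ℤ)^(k.natAbs) * p14Z ((n:ℤ) - heptQZ k) : ℤ) : ℚ)
      = (-1:ℚ)^(k.natAbs) * (if Eab 4 1 k ≤ n then coeff (n - Eab 4 1 k) P14s else 0) := by
    intro k _
    have hcast := Eab41_cast k
    push_cast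
    congr 1
    by_cases hE : Eab 4 1 k ≤ n
    · rw [if_pos hE, p14Z, if_pos (by omega)]
      rw [P14s, coeff_mk]
      have harg : ((n:ℤ) - heptQZ k).toNat = n - Eab 4 1 k := by omega
      rw [harg]
      norm_cast
    · rw [if_neg hE, p14Z, if_neg (by omega)]
      norm_num
  have hsum : ((∑ k ∈ Icc (-((3*n+3:ℕ):ℤ)) ((3*n+3:ℕ):ℤ),
      (-1:ℤ)^(k.natAbs) * p14Z ((n:ℤ) - heptQZ k) : ℤ) : ℚ) = (M:ℚ) := by
    push_cast
    rw [← hQ]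
    apply Finset.sum_congr rfl
    intro k hk
    have := hterm k hk
    push_cast at this
    exact this
  have := Int.cast_injective (α := ℚ) hsum
  rw [show (-((3*n+3:ℕ):ℤ)) = -(3*(n:ℤ)+3) by push_cast; ring,
    show (((3*n+3:ℕ)):ℤ) = 3*(n:ℤ)+3 by push_cast; ring] at this
  exact this

end MainPart

lemma hept_lb (m : ℤ) (hm : 1 ≤ m) : m ≤ heptZ m ∧ m ≤ heptQZ m := by
  obtain ⟨c, hc⟩ := Int.even_mul_succ_self m
  have e1 : Even (m*(5*m-3)) := ⟨c + 2*m*m - 2*m, by linear_combination hc⟩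
  have q1 := Int.two_mul_ediv_two_of_even e1
  have q2 := Int.two_mul_ediv_two_of_even (even_helper1 m)
  constructor
  · rw [heptZ]; nlinarith
  · rw [heptQZ]; nlinarith

lemma heptQZ_zero : heptQZ 0 = 0 := by simp [heptQZ]

theorem p14_recurrence' (n : ℕ) (hn : 1 ≤ n) (M : ℤ)
    (hM1 : ∀ m : ℕ, 1 ≤ m → ((n : ℤ) = 5 * pentZ m ∨ (n : ℤ) = 5 * pentQZ m) →
      M = (-1) ^ m)
    (hM0 : (∀ m : ℕ, 1 ≤ m → (n : ℤ) ≠ 5 * pentZ m ∧ (n : ℤ) ≠ 5 * pentQZ m) → M = 0) :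
    p14Z n = M + ∑' k : ℕ, (-1 : ℤ) ^ k *
      (p14Z ((n : ℤ) - heptZ (k + 1)) + p14Z ((n : ℤ) - heptQZ (k + 1))) := by
  have hmaster := master n hn M hM1 hM0
  set g : ℤ → ℤ := fun k => (-1:ℤ)^(k.natAbs) * p14Z ((n:ℤ) - heptQZ k) with hg
  set Nz : ℤ := 3*(n:ℤ)+3 with hNz
  -- split the symmetric sum
  have hsplit1 : Icc (-Nz) Nz = Icc (-Nz) (-1) ∪ Icc 0 Nz := by
    ext x; simp only [Finset.mem_union, Finset.mem_Icc]; omega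
  have hdisj : Disjoint (Icc (-Nz) (-1)) (Icc (0:ℤ) Nz) := by
    simp only [Finset.disjoint_left, Finset.mem_Icc]
    intro a ha hb; omega
  have hsplit2 : Icc (0:ℤ) Nz = insert 0 (Icc 1 Nz) := by
    ext x; simp only [Finset.mem_insert, Finset.mem_Icc]; omega
  have h0notin : (0:ℤ) ∉ Icc (1:ℤ) Nz := by simp
  have hmap : Icc (-Nz) (-1) = Finset.map ⟨fun k => -k, fun a b h => by simp only at h; omega⟩ (Icc 1 Nz) := by
    ext x
    simp only [Finset.mem_map, Function.Embedding.coeFn_mk, Finset.mem_Icc]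
    constructor
    · intro hx; exact ⟨-x, by omega, by show -(-x) = x; omega⟩
    · rintro ⟨y, hy, rfl⟩; show -Nz ≤ -y ∧ -y ≤ -1; omega
  have hsum : ∑ k ∈ Icc (-Nz) Nz, g k
      = g 0 + ∑ k ∈ Icc (1:ℤ) Nz, (g k + g (-k)) := by
    rw [hsplit1, Finset.sum_union hdisj, hsplit2, Finset.sum_insert h0notin, hmap,
      Finset.sum_map, Finset.sum_add_distrib]
    change ∑ x ∈ Icc 1 Nz, g (-x) + _ = _
    ring
  have hg0 : g 0 = p14Z n := by
    rw [hg]; simp [heptQZ_zero]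
  -- convert the ℤ-interval sum to a ℕ-range sum
  have hmapN : Icc (1:ℤ) Nz = Finset.map ⟨fun j : ℕ => (j:ℤ)+1, fun a b h => by simp only at h; omega⟩
      (range (3*n+3)) := by
    ext x
    simp only [Finset.mem_map, Function.Embedding.coeFn_mk, Finset.mem_range, Finset.mem_Icc]
    constructor
    · intro hx
      refine ⟨(x-1).toNat, by omega, by show ((x-1).toNat:ℤ)+1 = x; omega⟩
    · rintro ⟨y, hy, rfl⟩; show 1 ≤ (y:ℤ)+1 ∧ (y:ℤ)+1 ≤ Nz; omega
  have hterm : ∀ j : ℕ, g ((j:ℤ)+1) + g (-((j:ℤ)+1))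
      = -((-1:ℤ)^j * (p14Z ((n:ℤ) - heptZ ((j:ℤ)+1)) + p14Z ((n:ℤ) - heptQZ ((j:ℤ)+1)))) := by
    intro j
    rw [hg]
    simp only
    rw [Int.natAbs_neg]
    have habs : ((j:ℤ)+1).natAbs = j+1 := by omega
    rw [habs, heptQZ_neg]
    rw [pow_succ]
    ring
  have hfin : ∑' k : ℕ, (-1 : ℤ) ^ k *
      (p14Z ((n : ℤ) - heptZ (k + 1)) + p14Z ((n : ℤ) - heptQZ (k + 1)))
      = ∑ k ∈ range (3*n+3), (-1 : ℤ) ^ k *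
      (p14Z ((n : ℤ) - heptZ (k + 1)) + p14Z ((n : ℤ) - heptQZ (k + 1))) := by
    apply tsum_eq_sum
    intro k hk
    simp only [Finset.mem_range, not_lt] at hk
    obtain ⟨l1, l2⟩ := hept_lb ((k:ℤ)+1) (by omega)
    have hz1 : p14Z ((n:ℤ) - heptZ ((k:ℤ)+1)) = 0 := by
      rw [p14Z, if_neg (by omega)]
    have hz2 : p14Z ((n:ℤ) - heptQZ ((k:ℤ)+1)) = 0 := by
      rw [p14Z, if_neg (by omega)]
    rw [hz1, hz2]
    ring
  rw [hfin]
  rw [hsum, hg0] at hmaster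
  rw [hmapN, Finset.sum_map] at hmaster
  change p14Z n + ∑ j ∈ range (3*n+3), (g ((j:ℤ)+1) + g (-((j:ℤ)+1))) = M at hmaster
  have hsum2 : ∑ j ∈ range (3*n+3), (g ((j:ℤ)+1) + g (-((j:ℤ)+1)))
      = -∑ j ∈ range (3*n+3), (-1 : ℤ) ^ j *
      (p14Z ((n : ℤ) - heptZ ((j:ℤ) + 1)) + p14Z ((n : ℤ) - heptQZ ((j:ℤ) + 1))) := by
    rw [← Finset.sum_neg_distrib]
    apply Finset.sum_congr rfl
    intro j _
    exact hterm j
  rw [hsum2] at hmaster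
  omega

end P14

theorem p14_recurrence (n : ℕ) (hn : 1 ≤ n) (M : ℤ)
    (hM1 : ∀ m : ℕ, 1 ≤ m → ((n : ℤ) = 5 * pentZ m ∨ (n : ℤ) = 5 * pentQZ m) →
      M = (-1) ^ m)
    (hM0 : (∀ m : ℕ, 1 ≤ m → (n : ℤ) ≠ 5 * pentZ m ∧ (n : ℤ) ≠ 5 * pentQZ m) → M = 0) :
    p14Z n = M + ∑' k : ℕ, (-1 : ℤ) ^ k *
      (p14Z ((n : ℤ) - heptZ (k + 1)) + p14Z ((n : ℤ) - heptQZ (k + 1))) :=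
  P14.p14_recurrence' n hn M hM1 hM0
end

section
/- Let m ≥ 3 and n ∈ ℕ. Then n · p'_m(n) = ∑_{k=1}^{n} σ'_m(k) · p'_m(n - k), where p'_m(n) counts partitions of n into parts ≡ 0, 1, or m-1 (mod m) and σ'_m(k) is the sum of divisors of k that are ≡ 0, 1, or m-1 (mod m). -/
/-- `p'_m(n)`: the number of partitions of `n` into parts ≡ 0, 1, or m-1 (mod m). -/
def pm (m n : ℕ) : ℕ :=
  restrictedPartitionCount (fun i => i % m = 0 ∨ i % m = 1 ∨ i % m = m - 1) n

/-- `σ'_m(n)`: the sum of divisors of `n` congruent to 0, 1, or m-1 (mod m). -/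
def sigma' (m n : ℕ) : ℕ :=
  ∑ d ∈ n.divisors, if d % m = 0 ∨ d % m = 1 ∨ d % m = m - 1 then d else 0

open Finset

theorem Nat.sum_Ioc_sum_divisorsAntidiagonal {M : Type*} [AddCommMonoid M] (f : ℕ × ℕ → M)
    (n : ℕ) :
    ∑ k ∈ Ioc 0 n, ∑ x ∈ k.divisorsAntidiagonal, f x =
      ∑ d ∈ Ioc 0 n, ∑ j ∈ Ioc 0 n with d * j ≤ n, f (d, j) := by
  set S := {x ∈ Ioc 0 n ×ˢ Ioc 0 n | x.1 * x.2 ≤ n}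
  have hfiber : ∀ k ∈ Ioc 0 n, k.divisorsAntidiagonal = {x ∈ S | x.1 * x.2 = k} := by
    intro k hk
    rw [mem_Ioc] at hk
    rw [Nat.divisorsAntidiagonal_eq_prod_filter_of_le hk.1.ne' hk.2, filter_filter]
    exact filter_congr fun x _ ↦ ⟨fun h ↦ ⟨h ▸ hk.2, h⟩, And.right⟩
  have hmaps : ∀ x ∈ S, x.1 * x.2 ∈ Ioc 0 n := by
    intro x hx
    simp only [S, mem_filter, mem_product, mem_Ioc] at hx
    exact mem_Ioc.2 ⟨Nat.mul_pos hx.1.1.1 hx.1.2.1, hx.2⟩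
  rw [sum_congr rfl fun k hk ↦ by rw [hfiber k hk], sum_fiberwise_of_maps_to hmaps,
    sum_filter, sum_product]
  simp_rw [sum_filter]

namespace Nat.Partition

variable {n : ℕ}

theorem sum_Ioc_count_smul (p : n.Partition) : ∑ d ∈ Ioc 0 n, p.parts.count d • d = n := by
  rw [← sum_multiset_count_of_subset _ _ fun d hd ↦ ?_, p.parts_sum]
  rw [Multiset.mem_toFinset] at hd
  exact mem_Ioc.2 ⟨p.parts_pos hd, p.le_of_mem_parts hd⟩

theorem count_smul_le (p : n.Partition) (d : ℕ) : p.parts.count d • d ≤ n :=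
  calc p.parts.count d • d
      ≤ ∑ i ∈ insert d p.parts.toFinset, p.parts.count i • i :=
        single_le_sum (f := fun i ↦ p.parts.count i • i) (fun _ _ ↦ Nat.zero_le _)
          (mem_insert_self _ _)
    _ = n := by rw [← sum_multiset_count_of_subset _ _ (subset_insert _ _), p.parts_sum]

variable {P : ℕ → Prop} [DecidablePred P]

theorem mem_restricted {p : n.Partition} : p ∈ restricted n P ↔ ∀ i ∈ p.parts, P i := by
  simp [restricted]

theorem card_restricted_filter_le_count {d j : ℕ} (hd : 0 < d) (hP : P d) (h : d * j ≤ n) :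
    #{p ∈ restricted n P | j ≤ p.parts.count d} = #(restricted (n - d * j) P) := by
  have sum_replicate : (Multiset.replicate j d).sum = d * j := by
    rw [Multiset.sum_replicate, smul_eq_mul, mul_comm]
  refine card_bij'
    (fun p hp ↦
      { parts := p.parts - Multiset.replicate j d
        parts_pos := fun hi ↦ p.parts_pos (Multiset.mem_of_le (Multiset.sub_le_self _ _) hi)
        parts_sum := by
          have hle := Multiset.le_count_iff_replicate_le.1 (mem_filter.1 hp).2
          have := congrArg Multiset.sum (tsub_add_cancel_of_le hle)
          rw [Multiset.sum_add, sum_replicate, p.parts_sum] at this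
          omega })
    (fun q _ ↦
      { parts := q.parts + Multiset.replicate j d
        parts_pos := fun hi ↦ by
          rcases Multiset.mem_add.1 hi with hi | hi
          · exact q.parts_pos hi
          · rwa [Multiset.eq_of_mem_replicate hi]
        parts_sum := by rw [Multiset.sum_add, sum_replicate, q.parts_sum]; omega })
    (fun p hp ↦ ?_) (fun q hq ↦ ?_) (fun p hp ↦ ?_) (fun q _ ↦ ?_)
  · rw [mem_filter, mem_restricted] at hp
    exact mem_restricted.2 fun i hi ↦ hp.1 i (Multiset.mem_of_le (Multiset.sub_le_self _ _) hi)
  · rw [mem_restricted] at hq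
    refine mem_filter.2 ⟨mem_restricted.2 fun i hi ↦ ?_, by simp⟩
    rcases Multiset.mem_add.1 hi with hi | hi
    · exact hq i hi
    · rwa [Multiset.eq_of_mem_replicate hi]
  · exact Nat.Partition.ext
      (tsub_add_cancel_of_le (Multiset.le_count_iff_replicate_le.1 (mem_filter.1 hp).2))
  · exact Nat.Partition.ext (add_tsub_cancel_right _ _)

theorem sum_restricted_count {d : ℕ} (hd : 0 < d) (hP : P d) :
    ∑ p ∈ restricted n P, p.parts.count d =
      ∑ j ∈ Ioc 0 n with d * j ≤ n, #(restricted (n - d * j) P) := by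
  set J := {j ∈ Ioc 0 n | d * j ≤ n}
  have hcount (p : n.Partition) : p.parts.count d = #{j ∈ J | j ≤ p.parts.count d} := by
    have hle : d * p.parts.count d ≤ n := by
      simpa [mul_comm] using p.count_smul_le d
    have : {j ∈ J | j ≤ p.parts.count d} = Ioc 0 (p.parts.count d) := by
      ext j
      simp only [J, mem_filter, mem_Ioc]
      constructor
      · exact fun h ↦ ⟨h.1.1.1, h.2⟩
      · intro h
        have := Nat.mul_le_mul_left d h.2
        refine ⟨⟨⟨h.1, ?_⟩, by omega⟩, h.2⟩
        nlinarith
    rw [this, Nat.card_Ioc, Nat.sub_zero]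
  calc ∑ p ∈ restricted n P, p.parts.count d
      = ∑ p ∈ restricted n P, #{j ∈ J | j ≤ p.parts.count d} := sum_congr rfl fun p _ ↦ hcount p
    _ = ∑ j ∈ J, #{p ∈ restricted n P | j ≤ p.parts.count d} :=
        sum_card_bipartiteAbove_eq_sum_card_bipartiteBelow _
    _ = _ := sum_congr rfl fun j hj ↦ card_restricted_filter_le_count hd hP (mem_filter.1 hj).2

theorem mul_card_restricted (P : ℕ → Prop) [DecidablePred P] (n : ℕ) :
    n * #(restricted n P) =
      ∑ k ∈ Ioc 0 n, (∑ d ∈ k.divisors with P d, d) * #(restricted (n - k) P) := by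
  let f : ℕ × ℕ → ℕ := fun x ↦ if P x.1 then x.1 * #(restricted (n - x.1 * x.2) P) else 0
  have hpart (d : ℕ) (hd : d ∈ Ioc 0 n) :
      ∑ p ∈ restricted n P, p.parts.count d • d = ∑ j ∈ Ioc 0 n with d * j ≤ n, f (d, j) := by
    by_cases hP : P d
    · simp only [f, hP, if_true, smul_eq_mul, ← mul_sum,
        sum_restricted_count (mem_Ioc.1 hd).1 hP, mul_comm]
    · simp only [f, hP, if_false, sum_const_zero]
      refine sum_eq_zero fun p hp ↦ ?_
      rw [Multiset.count_eq_zero.2 fun h ↦ hP (mem_restricted.1 hp d h), zero_smul]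
  have hweight (k : ℕ) (hk : k ∈ Ioc 0 n) :
      ∑ x ∈ k.divisorsAntidiagonal, f x =
        (∑ d ∈ k.divisors with P d, d) * #(restricted (n - k) P) := by
    rw [sum_filter, sum_mul, ← Nat.sum_divisorsAntidiagonal fun d _ ↦
      (if P d then d else 0) * #(restricted (n - k) P)]
    refine sum_congr rfl fun x hx ↦ ?_
    simp only [f, ite_mul, zero_mul]
    rw [(Nat.mem_divisorsAntidiagonal.1 hx).1]
  calc n * #(restricted n P)
      = ∑ p ∈ restricted n P, ∑ d ∈ Ioc 0 n, p.parts.count d • d := by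
        rw [sum_congr rfl fun p _ ↦ p.sum_Ioc_count_smul, sum_const, smul_eq_mul, mul_comm]
    _ = ∑ d ∈ Ioc 0 n, ∑ j ∈ Ioc 0 n with d * j ≤ n, f (d, j) := by
        rw [sum_comm]; exact sum_congr rfl hpart
    _ = _ := by
        rw [← Nat.sum_Ioc_sum_divisorsAntidiagonal]; exact sum_congr rfl hweight

end Nat.Partition

theorem euler_convolution_restricted_general (m : ℕ) (n : ℕ) :
    n * pm m n = ∑ k ∈ Finset.Icc 1 n, sigma' m k * pm m (n - k) := by
  let P : ℕ → Prop := fun i ↦ i % m = 0 ∨ i % m = 1 ∨ i % m = m - 1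
  have hpm (k : ℕ) : pm m k = #(Nat.Partition.restricted k P) := by
    rw [pm, restrictedPartitionCount, Fintype.card_subtype]
    rfl
  have hsigma (k : ℕ) : sigma' m k = ∑ d ∈ k.divisors with P d, d := (sum_filter _ _).symm
  simp only [hpm, hsigma]
  rw [show Icc 1 n = Ioc 0 n from Icc_add_one_left_eq_Ioc 0 n]
  exact Nat.Partition.mul_card_restricted P n

theorem euler_convolution_restricted (m : ℕ) (hm : 3 ≤ m) (n : ℕ) (hn : 1 ≤ n) :
    n * pm m n = ∑ k ∈ Finset.Icc 1 n, sigma' m k * pm m (n - k) :=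
  euler_convolution_restricted_general m n
end
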